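/- arXiv:math/0408076 — 6 statements merged into one kernel-verified Lean document; each statement's English description precedes it below -/
import Mathlib

section
/- Let A_1, A_2 be symmetric n×n real matrices with rank([A_1,A_2]) = 2, and suppose they admit (n+1)×(n+1) symmetric commuting extensions, given by bordering with column vectors a, b and scalars α, β. Then the vectors a and b both lie in the image of [A_1,A_2], and a, b are linearly independent. -/
/-!
The first commutativity equation says `[A₁, A₂] = b aᵀ - a bᵀ`, so every vector in the image of
`[A₁, A₂]` is a combination of `a` and `b`. The image is two-dimensional and `span {a, b}` has
dimension at most two, so the two spaces coincide; in particular `a` and `b` lie in the image and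
their span has dimension two, i.e. they are linearly independent.
-/

open Matrix Module

theorem Submodule.eq_span_range_and_linearIndependent_of_le_of_finrank_eq_card
    {K V ι : Type*} [DivisionRing K] [AddCommGroup V] [Module K V] [Fintype ι]
    {W : Submodule K V} {v : ι → V} (hle : W ≤ span K (Set.range v))
    (hW : finrank K W = Fintype.card ι) :
    W = span K (Set.range v) ∧ LinearIndependent K v := by
  have : FiniteDimensional K (span K (Set.range v)) := .span_of_finite K (Set.finite_range v)
  have hspan : W = span K (Set.range v) :=
    eq_of_le_of_finrank_le hle (hW ▸ finrank_range_le_card v)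
  refine ⟨hspan, linearIndependent_iff_card_eq_finrank_span.mpr ?_⟩
  rw [Set.finrank, ← hspan, hW]

namespace Matrix

variable {R m : Type*} [CommRing R] [Fintype m]

theorem vecMulVec_sub_vecMulVec_mulVec (a b v : m → R) :
    (vecMulVec b a - vecMulVec a b) *ᵥ v = (a ⬝ᵥ v) • b - (b ⬝ᵥ v) • a := by
  simp only [sub_mulVec, vecMulVec_mulVec, op_smul_eq_smul]

theorem range_mulVecLin_vecMulVec_sub_vecMulVec_le (a b : m → R) :
    LinearMap.range (vecMulVec b a - vecMulVec a b).mulVecLin ≤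
      Submodule.span R (Set.range ![a, b]) := by
  rintro _ ⟨v, rfl⟩
  rw [mulVecLin_apply, vecMulVec_sub_vecMulVec_mulVec]
  exact sub_mem (Submodule.smul_mem _ _ (Submodule.subset_span ⟨1, rfl⟩))
    (Submodule.smul_mem _ _ (Submodule.subset_span ⟨0, rfl⟩))

end Matrix

theorem bordering_vectors_in_commutator_image_general (n : ℕ)
    (A₁ A₂ : Matrix (Fin n) (Fin n) ℝ)
    (hrank : (A₁ * A₂ - A₂ * A₁).rank = 2)
    (a b : Fin n → ℝ)
    (heq1 : A₁ * A₂ - A₂ * A₁ + Matrix.vecMulVec a b - Matrix.vecMulVec b a = 0) :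
    (∃ v, (A₁ * A₂ - A₂ * A₁).mulVec v = a) ∧
    (∃ v, (A₁ * A₂ - A₂ * A₁).mulVec v = b) ∧
    LinearIndependent ℝ ![a, b] := by
  have hC : A₁ * A₂ - A₂ * A₁ = vecMulVec b a - vecMulVec a b := by
    rw [← sub_eq_zero, ← heq1]; abel
  rw [hC] at hrank ⊢
  obtain ⟨hrange, hli⟩ :=
    Submodule.eq_span_range_and_linearIndependent_of_le_of_finrank_eq_card
      (range_mulVecLin_vecMulVec_sub_vecMulVec_le a b) (by rw [← rank, hrank, Fintype.card_fin])
  have hmem (i : Fin 2) : ![a, b] i ∈ LinearMap.range (vecMulVec b a - vecMulVec a b).mulVecLin :=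
    hrange ▸ Submodule.subset_span ⟨i, rfl⟩
  exact ⟨hmem 0, hmem 1, hli⟩

/-- for symmetric A₁, A₂ with rank [A₁,A₂] = 2 admitting (n+1)×(n+1)
symmetric commuting extensions (bordering vectors a, b, scalars α, β), both a and b
lie in the image of [A₁,A₂] and a, b are linearly independent. -/
theorem bordering_vectors_in_commutator_image (n : ℕ)
    (A₁ A₂ : Matrix (Fin n) (Fin n) ℝ)
    (h₁ : A₁.IsSymm) (h₂ : A₂.IsSymm)
    (hrank : (A₁ * A₂ - A₂ * A₁).rank = 2)
    (a b : Fin n → ℝ) (α β : ℝ)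
    (heq1 : A₁ * A₂ - A₂ * A₁ + Matrix.vecMulVec a b - Matrix.vecMulVec b a = 0)
    (heq2 : A₁.mulVec b + β • a - A₂.mulVec a - α • b = 0) :
    (∃ v, (A₁ * A₂ - A₂ * A₁).mulVec v = a) ∧
    (∃ v, (A₁ * A₂ - A₂ * A₁).mulVec v = b) ∧
    LinearIndependent ℝ ![a, b] :=
  bordering_vectors_in_commutator_image_general n A₁ A₂ hrank a b heq1
end

section
/- Let A_1, A_2 be symmetric n×n real matrices with rank([A_1,A_2]) = 2, and let {v,w} be a basis of the image of [A_1,A_2]. If A_1, A_2 admit (n+1)×(n+1) symmetric commuting extensions, then the six vectors v, w, A_1 v, A_1 w, A_2 v, A_2 w are linearly dependent. -/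
/-!
The first extension equation says `[A₁,A₂] = c₂c₁ᵀ - c₁c₂ᵀ`, so the image of `[A₁,A₂]` lies in
`span {c₁, c₂}`; as that image is 2-dimensional, `span {c₁, c₂} = span {v, w}`. Writing `c₁, c₂`
in the basis `v, w`, the second equation `A₁c₂ + γ₂c₁ - A₂c₁ - γ₁c₂ = 0` becomes a linear relation
among the six vectors whose coefficients on `A₁v, A₁w, A₂v, A₂w` are the coordinates of `c₂` and
`-c₁`. Independence would force `c₁ = c₂ = 0`, hence `[A₁,A₂] = 0`, contradicting rank 2.
-/

open Module Submodule Matrix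

theorem Matrix.sub_vecMulVec_mulVec {R ι : Type*} [CommRing R] [Fintype ι] (a b x : ι → R) :
    (vecMulVec a b - vecMulVec b a) *ᵥ x = (b ⬝ᵥ x) • a - (a ⬝ᵥ x) • b := by
  simp only [sub_mulVec, vecMulVec_mulVec, op_smul_eq_smul]

theorem Matrix.range_toLin'_sub_vecMulVec_le {R ι : Type*} [CommRing R] [Fintype ι]
    [DecidableEq ι] (a b : ι → R) :
    LinearMap.range (toLin' (vecMulVec a b - vecMulVec b a)) ≤ span R {a, b} := by
  rintro _ ⟨x, rfl⟩
  rw [toLin'_apply, sub_vecMulVec_mulVec]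
  exact sub_mem (smul_mem _ _ (subset_span (by simp))) (smul_mem _ _ (subset_span (by simp)))

theorem Submodule.eq_span_pair_of_le_of_finrank_eq_two {K V : Type*} [DivisionRing K]
    [AddCommGroup V] [Module K V] {p : Submodule K V} {a b : V}
    (hle : p ≤ span K {a, b}) (hp : finrank K p = 2) : p = span K {a, b} := by
  classical
  have := FiniteDimensional.span_of_finite K (Set.toFinite {a, b})
  refine eq_of_le_of_finrank_le hle (hp ▸ ?_)
  have hcard := finrank_span_finset_le_card (R := K) ({a, b} : Finset V)
  rw [Finset.coe_pair] at hcard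
  exact hcard.trans Finset.card_le_two

theorem eq_zero_of_mem_span_pair_of_linearIndependent {R M : Type*} [CommRing R]
    [AddCommGroup M] [Module R M] {f g : M →ₗ[R] M} {v w c₁ c₂ : M} {γ₁ γ₂ : R}
    (hLI : LinearIndependent R ![v, w, f v, f w, g v, g w])
    (hc₁ : c₁ ∈ span R {v, w}) (hc₂ : c₂ ∈ span R {v, w})
    (hrel : f c₂ + γ₂ • c₁ - g c₁ - γ₁ • c₂ = 0) : c₁ = 0 ∧ c₂ = 0 := by
  obtain ⟨r, s, rfl⟩ := mem_span_pair.mp hc₁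
  obtain ⟨p, q, rfl⟩ := mem_span_pair.mp hc₂
  have hsum : ∑ i, ![γ₂ * r - γ₁ * p, γ₂ * s - γ₁ * q, p, q, -r, -s] i •
      ![v, w, f v, f w, g v, g w] i = 0 := by
    simp only [map_add, map_smul] at hrel
    simp only [Fin.sum_univ_six, cons_val]
    linear_combination (norm := module) hrel
  have hzero := Fintype.linearIndependent_iff.mp hLI _ hsum
  have hp : p = 0 := hzero 2
  have hq : q = 0 := hzero 3
  have hr : r = 0 := neg_eq_zero.mp (hzero 4)
  have hs : s = 0 := neg_eq_zero.mp (hzero 5)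
  simp [hp, hq, hr, hs]

theorem six_vectors_linearly_dependent_general (n : ℕ)
    (A₁ A₂ : Matrix (Fin n) (Fin n) ℝ)
    (hrank : (A₁ * A₂ - A₂ * A₁).rank = 2)
    (v w : Fin n → ℝ)
    (hbasis : Submodule.span ℝ {v, w}
      = LinearMap.range (Matrix.toLin' (A₁ * A₂ - A₂ * A₁)))
    (hexist : ∃ (c₁ c₂ : Fin n → ℝ) (γ₁ γ₂ : ℝ),
      A₁ * A₂ - A₂ * A₁ + Matrix.vecMulVec c₁ c₂ - Matrix.vecMulVec c₂ c₁ = 0 ∧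
      A₁.mulVec c₂ + γ₂ • c₁ - A₂.mulVec c₁ - γ₁ • c₂ = 0) :
    ¬ LinearIndependent ℝ
      ![v, w, A₁.mulVec v, A₁.mulVec w, A₂.mulVec v, A₂.mulVec w] := by
  intro hLI
  obtain ⟨c₁, c₂, γ₁, γ₂, hcomm, hborder⟩ := hexist
  have hM : A₁ * A₂ - A₂ * A₁ = vecMulVec c₂ c₁ - vecMulVec c₁ c₂ :=
    eq_sub_of_add_eq (sub_eq_zero.mp hcomm)
  have hspan : span ℝ {v, w} = span ℝ {c₂, c₁} := by
    refine eq_span_pair_of_le_of_finrank_eq_two ?_ ?_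
    · rw [hbasis, hM]
      exact range_toLin'_sub_vecMulVec_le c₂ c₁
    · rwa [hbasis, toLin'_apply']
  have hc₁ : c₁ ∈ span ℝ {v, w} := hspan ▸ subset_span (by simp)
  have hc₂ : c₂ ∈ span ℝ {v, w} := hspan ▸ subset_span (by simp)
  obtain ⟨rfl, rfl⟩ := eq_zero_of_mem_span_pair_of_linearIndependent
    (f := toLin' A₁) (g := toLin' A₂) hLI hc₁ hc₂ (by simpa only [toLin'_apply] using hborder)
  simp [hM, rank_zero] at hrank

/-- Lemma 1: if symmetric A₁, A₂ with rank [A₁,A₂] = 2 admit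
(n+1)×(n+1) symmetric commuting extensions, and {v,w} is a basis of Im [A₁,A₂],
then v, w, A₁v, A₁w, A₂v, A₂w are linearly dependent. -/
theorem six_vectors_linearly_dependent (n : ℕ)
    (A₁ A₂ : Matrix (Fin n) (Fin n) ℝ)
    (h₁ : A₁.IsSymm) (h₂ : A₂.IsSymm)
    (hrank : (A₁ * A₂ - A₂ * A₁).rank = 2)
    (v w : Fin n → ℝ)
    (hvw : LinearIndependent ℝ ![v, w])
    (hbasis : Submodule.span ℝ {v, w}
      = LinearMap.range (Matrix.toLin' (A₁ * A₂ - A₂ * A₁)))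
    (hexist : ∃ (c₁ c₂ : Fin n → ℝ) (γ₁ γ₂ : ℝ),
      A₁ * A₂ - A₂ * A₁ + Matrix.vecMulVec c₁ c₂ - Matrix.vecMulVec c₂ c₁ = 0 ∧
      A₁.mulVec c₂ + γ₂ • c₁ - A₂.mulVec c₁ - γ₁ • c₂ = 0) :
    ¬ LinearIndependent ℝ
      ![v, w, A₁.mulVec v, A₁.mulVec w, A₂.mulVec v, A₂.mulVec w] :=
  six_vectors_linearly_dependent_general n A₁ A₂ hrank v w hbasis hexist
end

section
/- Symmetric n×n real matrices A_1,...,A_d admit N×N symmetric commuting extensions if and only if there exist N×N real diagonal matrices Λ_1,...,Λ_d and an n×N real matrix Q with orthonormal rows (i.e., QQᵀ = I_n) such that A_i = Q Λ_i Qᵀ for each i. -/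
open Matrix

/-- Theorem 5: symmetric A₁,...,A_d admit N×N symmetric commuting
extensions iff A_i = Q Λ_i Qᵀ for diagonal Λ_i and Q with orthonormal rows. -/
theorem symmetric_commuting_extensions_iff_diagonalization
    (d n N : ℕ) (hnN : n ≤ N)
    (A : Fin d → Matrix (Fin n) (Fin n) ℝ)
    (hA : ∀ i, (A i).IsSymm) :
    (∃ Atil : Fin d → Matrix (Fin N) (Fin N) ℝ,
      (∀ i, (Atil i).IsSymm) ∧
      (∀ i, (Atil i).submatrix (Fin.castLE hnN) (Fin.castLE hnN) = A i) ∧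
      (∀ i j, Atil i * Atil j = Atil j * Atil i)) ↔
    (∃ (Λ : Fin d → Fin N → ℝ) (Q : Matrix (Fin n) (Fin N) ℝ),
      Q * Qᵀ = 1 ∧ ∀ i, A i = Q * Matrix.diagonal (Λ i) * Qᵀ) := by
  constructor
  · rintro ⟨Atil, hsymm, hsub, hcomm⟩
    classical
    set T : Fin d → EuclideanSpace ℝ (Fin N) →ₗ[ℝ] EuclideanSpace ℝ (Fin N) :=
      fun i => Matrix.toEuclideanLin (Atil i) with hT
    have hSym : ∀ i, (T i).IsSymmetric := by
      intro i
      refine Matrix.isHermitian_iff_isSymmetric.mp ?_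
      rw [Matrix.IsHermitian, conjTranspose_eq_transpose_of_trivial]
      exact hsymm i
    have hC : Pairwise (Function.onFun Commute T) := by
      intro i j _
      unfold Function.onFun Commute SemiconjBy
      ext v k
      simp [hT, Matrix.toEuclideanLin_apply, Matrix.mulVec_mulVec, hcomm i j]
    set V : (Fin d → ℝ) → Submodule ℝ (EuclideanSpace ℝ (Fin N)) :=
      fun α => ⨅ j, Module.End.eigenspace (T j) (α j) with hVdef
    have hV0 : DirectSum.IsInternal V :=
      LinearMap.IsSymmetric.LinearMap.IsSymmetric.directSum_isInternal_of_pairwise_commute hSym hC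
    have hV0' := LinearMap.IsSymmetric.orthogonalFamily_iInf_eigenspaces hSym
    obtain ⟨hindep, hsup⟩ :=
      (DirectSum.isInternal_submodule_iff_iSupIndep_and_iSup_eq_top V).mp hV0
    set S : Set (Fin d → ℝ) := {α | V α ≠ ⊥} with hSdef
    have hSfin : S.Finite := WellFoundedGT.finite_ne_bot_of_iSupIndep hindep
    haveI : Fintype S := hSfin.fintype
    have hindepS : iSupIndep (fun α : S => V α) := hindep.comp Subtype.val_injective
    have hsupS : ⨆ α : S, V α = ⊤ := by
      rw [← hsup]
      apply le_antisymm
      · exact iSup_le fun α => le_iSup V α.val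
      · refine iSup_le fun α => ?_
        by_cases h : V α = ⊥
        · rw [h]; exact bot_le
        · exact le_iSup (fun α : S => V α.val) ⟨α, h⟩
    have hV : DirectSum.IsInternal (fun α : S => V α) :=
      (DirectSum.isInternal_submodule_iff_iSupIndep_and_iSup_eq_top _).mpr ⟨hindepS, hsupS⟩
    have hV' : OrthogonalFamily ℝ (fun α : S => V α) (fun α : S => (V α).subtypeₗᵢ) := by
      intro α β hab
      exact hV0' (fun h => hab (Subtype.ext h))
    have hrank : Module.finrank ℝ (EuclideanSpace ℝ (Fin N)) = N := by
      simp [finrank_euclideanSpace]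
    set b := hV.subordinateOrthonormalBasis hrank hV' with hb
    set χ0 : Fin N → S := fun a => hV.subordinateOrthonormalBasisIndex hrank a hV' with hχ0
    set χ : Fin N → (Fin d → ℝ) := fun a => (χ0 a : Fin d → ℝ) with hχ
    have heig : ∀ i a, (T i) (b a) = χ a i • b a := by
      intro i a
      have hmem := hV.subordinateOrthonormalBasis_subordinate hrank a hV'
      have hmem' : b a ∈ ⨅ j, Module.End.eigenspace (T j) (χ a j) := hmem
      have := (Submodule.mem_iInf _).mp hmem' i
      exact Module.End.mem_eigenspace_iff.mp this
    set Qt : Matrix (Fin N) (Fin N) ℝ := Matrix.of fun a k => b a k with hQt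
    have hQQ : Qt * Qtᵀ = 1 := by
      have hbo := b.orthonormal
      rw [orthonormal_iff_ite] at hbo
      ext a c
      have h := hbo a c
      simp only [PiLp.inner_apply, RCLike.inner_apply, starRingEnd_apply, star_trivial] at h
      simp [hQt, Matrix.mul_apply, Matrix.one_apply, ← h, mul_comm]
    have hQtQ : Qtᵀ * Qt = 1 := mul_eq_one_comm.mp hQQ
    have hAt : ∀ i, Atil i * Qtᵀ = Qtᵀ * Matrix.diagonal (fun a => χ a i) := by
      intro i
      ext r a
      have h := heig i a
      have h' : (Atil i).mulVec (fun k => b a k) r = (χ a i • b a) r := by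
        have := congrFun (congrArg (WithLp.equiv 2 (Fin N → ℝ)) h) r
        simpa [Matrix.toEuclideanLin_apply, hT] using this
      rw [Matrix.mul_diagonal]
      calc (Atil i * Qtᵀ) r a = (Atil i).mulVec (fun k => b a k) r := by
            simp [Matrix.mul_apply, Matrix.mulVec, dotProduct, hQt]
        _ = χ a i * b a r := by rw [h']; simp
        _ = Qtᵀ r a * χ a i := by simp [hQt, mul_comm]
    have hdiag : ∀ i, Atil i = Qtᵀ * Matrix.diagonal (fun a => χ a i) * Qt := by
      intro i
      calc Atil i = Atil i * (Qtᵀ * Qt) := by rw [hQtQ, mul_one]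
      _ = (Atil i * Qtᵀ) * Qt := by rw [mul_assoc]
      _ = Qtᵀ * Matrix.diagonal (fun a => χ a i) * Qt := by rw [hAt]
    refine ⟨fun i a => χ a i, Qtᵀ.submatrix (Fin.castLE hnN) id, ?_, ?_⟩
    · ext a c
      simp only [Matrix.submatrix_apply, Matrix.mul_apply, Matrix.transpose_apply,
        Matrix.one_apply, id_eq]
      have h := congrFun (congrFun hQtQ (Fin.castLE hnN a)) (Fin.castLE hnN c)
      simp only [Matrix.mul_apply, Matrix.transpose_apply, Matrix.one_apply] at h
      rw [h]
      simp [Fin.castLE_inj]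
    · intro i
      have hQT : (Qtᵀ.submatrix (Fin.castLE hnN) id)ᵀ = Qt.submatrix id (Fin.castLE hnN) := by
        ext k a; simp
      rw [hQT, ← hsub i, hdiag i]
      rw [show (Qtᵀ * Matrix.diagonal (fun a => χ a i) * Qt).submatrix
            (Fin.castLE hnN) (Fin.castLE hnN)
          = (Qtᵀ * Matrix.diagonal (fun a => χ a i)).submatrix (Fin.castLE hnN) id
              * Qt.submatrix id (Fin.castLE hnN) from
        Matrix.submatrix_mul _ _ _ id _ Function.bijective_id]
      rw [show (Qtᵀ * Matrix.diagonal (fun a => χ a i)).submatrix (Fin.castLE hnN) id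
          = Qtᵀ.submatrix (Fin.castLE hnN) id * (Matrix.diagonal (fun a => χ a i)).submatrix id id
          from Matrix.submatrix_mul _ _ _ id _ Function.bijective_id]
      simp
  · rintro ⟨Λ, Q, hQ, hAQ⟩
    classical
    set v : Fin N → EuclideanSpace ℝ (Fin N) :=
      fun k => if h : (k : ℕ) < n then (WithLp.equiv 2 (Fin N → ℝ)).symm (Q ⟨k, h⟩) else 0 with hv
    set s : Set (Fin N) := {k | (k : ℕ) < n} with hs
    have hvon : Orthonormal ℝ (s.restrict v) := by
      rw [orthonormal_iff_ite]
      intro k l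
      have hk : ((k : Fin N) : ℕ) < n := k.2
      have hl : ((l : Fin N) : ℕ) < n := l.2
      simp only [Set.restrict_apply, hv, dif_pos hk, dif_pos hl]
      have h := congrFun (congrFun hQ ⟨(k : Fin N), hk⟩) ⟨(l : Fin N), hl⟩
      simp only [Matrix.mul_apply, Matrix.transpose_apply, Matrix.one_apply] at h
      simp only [PiLp.inner_apply, RCLike.inner_apply, starRingEnd_apply, star_trivial]
      have e : ∀ (m : s) x, (s.restrict v m).ofLp x = Q ⟨(m : Fin N), m.2⟩ x := fun m x =>
        congrArg (fun w : EuclideanSpace ℝ (Fin N) => w.ofLp x) (dif_pos m.2)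
      simp only [hv] at e
      simp only [e]
      simp only [mul_comm (Q ⟨(l : Fin N), hl⟩ _)]
      rw [h]
      by_cases hkl : k = l
      · subst hkl; simp
      · rw [if_neg, if_neg hkl]
        intro hcon
        apply hkl
        apply Subtype.ext
        have := congrArg (fun x : Fin n => (x : ℕ)) hcon
        simpa [Fin.ext_iff] using this
    have hcard : Module.finrank ℝ (EuclideanSpace ℝ (Fin N)) = Fintype.card (Fin N) := by
      simp [finrank_euclideanSpace]
    obtain ⟨b, hb⟩ := hvon.exists_orthonormalBasis_extension_of_card_eq hcard
    set Qt : Matrix (Fin N) (Fin N) ℝ := Matrix.of fun a k => b a k with hQt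
    have hQQ : Qt * Qtᵀ = 1 := by
      have hbo := b.orthonormal
      rw [orthonormal_iff_ite] at hbo
      ext a c
      have h := hbo a c
      simp only [PiLp.inner_apply, RCLike.inner_apply, starRingEnd_apply, star_trivial] at h
      simp [hQt, Matrix.mul_apply, Matrix.one_apply, ← h, mul_comm]
    have hQtQ : Qtᵀ * Qt = 1 := mul_eq_one_comm.mp hQQ
    have hrow : ∀ a : Fin n, ∀ k, Qt (Fin.castLE hnN a) k = Q a k := by
      intro a k
      have hmem : (Fin.castLE hnN a) ∈ s := a.2
      have := hb _ hmem
      simp only [hQt, Matrix.of_apply, this, hv, dif_pos (show ((Fin.castLE hnN a : Fin N) : ℕ) < n from a.2)]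
      rfl
    refine ⟨fun i => Qt * Matrix.diagonal (Λ i) * Qtᵀ, ?_, ?_, ?_⟩
    · intro i
      dsimp only
      rw [Matrix.IsSymm]
      rw [Matrix.transpose_mul, Matrix.transpose_mul, Matrix.transpose_transpose,
        Matrix.diagonal_transpose, mul_assoc]
    · intro i
      have h1 : Q = Qt.submatrix (Fin.castLE hnN) id := by
        ext a k; simp [hrow]
      have h2 : Qᵀ = Qtᵀ.submatrix id (Fin.castLE hnN) := by
        ext k a; simp [hrow]
      dsimp only
      rw [hAQ i, h2, h1]
      rw [show (Qt * Matrix.diagonal (Λ i) * Qtᵀ).submatrix (Fin.castLE hnN) (Fin.castLE hnN)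
          = (Qt * Matrix.diagonal (Λ i)).submatrix (Fin.castLE hnN) id
              * Qtᵀ.submatrix id (Fin.castLE hnN) from
        Matrix.submatrix_mul _ _ _ id _ Function.bijective_id]
      rw [show (Qt * Matrix.diagonal (Λ i)).submatrix (Fin.castLE hnN) id
          = Qt.submatrix (Fin.castLE hnN) id * (Matrix.diagonal (Λ i)).submatrix id id from
        Matrix.submatrix_mul _ _ _ id _ Function.bijective_id]
      simp
    · intro i j
      have key : ∀ p q : Fin d, Qt * Matrix.diagonal (Λ p) * Qtᵀ * (Qt * Matrix.diagonal (Λ q) * Qtᵀ)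
          = Qt * Matrix.diagonal (fun k => Λ p k * Λ q k) * Qtᵀ := by
        intro p q
        calc Qt * Matrix.diagonal (Λ p) * Qtᵀ * (Qt * Matrix.diagonal (Λ q) * Qtᵀ)
            = Qt * Matrix.diagonal (Λ p) * (Qtᵀ * Qt) * Matrix.diagonal (Λ q) * Qtᵀ := by
              simp only [mul_assoc]
          _ = Qt * (Matrix.diagonal (Λ p) * Matrix.diagonal (Λ q)) * Qtᵀ := by
              rw [hQtQ]; simp only [mul_one, mul_assoc]
          _ = Qt * Matrix.diagonal (fun k => Λ p k * Λ q k) * Qtᵀ := by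
              rw [Matrix.diagonal_mul_diagonal]
      dsimp only
      rw [key, key, show (fun k => Λ i k * Λ j k) = fun k => Λ j k * Λ i k from
        funext fun k => mul_comm _ _]
end

section
/- Let P_q be the space of real polynomials of degree ≤ q with inner product ⟨a|b⟩ = ∫_Ω w(x)a(x)b(x)dx for a positive weight w on Ω ⊂ ℝ, and let χ: P_q → P_q be the self-adjoint operator p ↦ Π_q(xp), where Π_q is orthogonal projection from P_{q+1} onto P_q. If {u_i} is an orthonormal eigenbasis of χ with χu_i = Λ_i u_i, then for every polynomial p of degree ≤ q+1, ⟨p|u_i⟩ = ⟨1|u_i⟩ · p(Λ_i). -/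
/-!
Dividing by `X - C Λ` writes `p = p(Λ) + (X - Λ) r` with `deg r ≤ q`. The eigenvalue equation says
exactly that `(X - Λ) u` is orthogonal to all polynomials of degree `≤ q`, so the second term
integrates against `u` to zero.
-/

open MeasureTheory Polynomial

namespace Polynomial

variable {R : Type*} [CommRing R]

theorem eval_eq_eval_add_mul_divByMonic_X_sub_C (p : R[X]) (a x : R) :
    p.eval x = p.eval a + (x - a) * (p /ₘ (X - C a)).eval x := by
  have h := congrArg (eval x) (modByMonic_add_div p (X - C a))
  rw [modByMonic_X_sub_C_eq_C_eval, eval_add, eval_mul, eval_sub, eval_X, eval_C, eval_C] at h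
  exact h.symm

theorem natDegree_divByMonic_X_sub_C_le [Nontrivial R] {p : R[X]} {n : ℕ}
    (hp : p.natDegree ≤ n + 1) (a : R) : (p /ₘ (X - C a)).natDegree ≤ n := by
  rw [natDegree_divByMonic p (monic_X_sub_C a), natDegree_X_sub_C]
  omega

end Polynomial

theorem delta_lemma_general (q : ℕ) (μ : Measure ℝ)
    (hint : ∀ p : Polynomial ℝ, Integrable (fun x => p.eval x) μ)
    (u : Polynomial ℝ) (Λ : ℝ)
    (heig : ∀ p : Polynomial ℝ, p.natDegree ≤ q →
      ∫ x, (x * u.eval x - Λ * u.eval x) * p.eval x ∂μ = 0) :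
    ∀ p : Polynomial ℝ, p.natDegree ≤ q + 1 →
      ∫ x, p.eval x * u.eval x ∂μ = (∫ x, u.eval x ∂μ) * p.eval Λ := by
  intro p hp
  set r := p /ₘ (X - C Λ)
  have hr_orth : ∫ x, (x * u.eval x - Λ * u.eval x) * r.eval x ∂μ = 0 :=
    heig r (natDegree_divByMonic_X_sub_C_le hp Λ)
  have hr_int : Integrable (fun x => (x * u.eval x - Λ * u.eval x) * r.eval x) μ := by
    have h := hint ((X * u - C Λ * u) * r)
    simp only [eval_mul, eval_sub, eval_X, eval_C] at h
    exact h
  calc ∫ x, p.eval x * u.eval x ∂μ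
      = ∫ x, (p.eval Λ * u.eval x + (x * u.eval x - Λ * u.eval x) * r.eval x) ∂μ := by
        congr 1; funext x
        rw [eval_eq_eval_add_mul_divByMonic_X_sub_C p Λ x]; ring
    _ = (∫ x, u.eval x ∂μ) * p.eval Λ := by
        rw [integral_add ((hint u).const_mul _) hr_int, integral_const_mul, hr_orth]; ring

/-- the δ lemma: if u is an eigenfunction of χ = Π_q ∘ (mult. by x)
with eigenvalue Λ, then for every polynomial p of degree ≤ q+1,
⟨p|u⟩ = ⟨1|u⟩ · p(Λ). -/
theorem delta_lemma (q : ℕ) (μ : Measure ℝ)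
    (hint : ∀ p : Polynomial ℝ, Integrable (fun x => p.eval x) μ)
    (u : Polynomial ℝ) (hu : u.natDegree ≤ q) (Λ : ℝ)
    (heig : ∀ p : Polynomial ℝ, p.natDegree ≤ q →
      ∫ x, (x * u.eval x - Λ * u.eval x) * p.eval x ∂μ = 0) :
    ∀ p : Polynomial ℝ, p.natDegree ≤ q + 1 →
      ∫ x, p.eval x * u.eval x ∂μ = (∫ x, u.eval x ∂μ) * p.eval Λ :=
  delta_lemma_general q μ hint u Λ heig
end

section
/- Suppose there exists an N-point cubature rule with positive weights w_α and nodes x_α ∈ ℝ^d that is exact for all polynomials of total degree ≤ 2q+1 with respect to a weight w on Ω ⊆ ℝ^d. Let {e_a} (a = 1,...,n, n = dim P_q) be an orthonormal basis of P_q and A_i the matrix with entries (A_i)_{ab} = ∫_Ω w(x) e_a(x) x_i e_b(x) dx. Define Q_{aα} = √(w_α) e_a(x_α) and Λ_i = diag((x_α)_i). Then QQᵀ = I_n and A_i = Q Λ_i Qᵀ for all i; consequently the A_1,...,A_d admit N×N symmetric commuting extensions. -/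
open MeasureTheory Matrix

/-- Theorem 9: a positive-weight cubature rule exact to degree 2q+1
yields Q with orthonormal rows and diagonal Λ_i with A_i = QΛ_iQᵀ; consequently the
matrices A_i admit N×N symmetric commuting extensions. -/
theorem cubature_gives_commuting_extensions
    (d q n N : ℕ) (hnN : n ≤ N)
    (μ : Measure (Fin d → ℝ))
    (w : Fin N → ℝ) (hw : ∀ α, 0 < w α)
    (pts : Fin N → Fin d → ℝ)
    (hexact : ∀ f : MvPolynomial (Fin d) ℝ, f.totalDegree ≤ 2 * q + 1 →
      ∫ x, MvPolynomial.eval x f ∂μ = ∑ α, w α * MvPolynomial.eval (pts α) f)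
    (e : Fin n → MvPolynomial (Fin d) ℝ) (hdeg : ∀ a, (e a).totalDegree ≤ q)
    (horth : ∀ a b, ∫ x, MvPolynomial.eval x (e a) * MvPolynomial.eval x (e b) ∂μ
      = if a = b then (1 : ℝ) else 0)
    (A : Fin d → Matrix (Fin n) (Fin n) ℝ)
    (hA : ∀ i a b, A i a b
      = ∫ x, MvPolynomial.eval x (e a) * x i * MvPolynomial.eval x (e b) ∂μ)
    (Q : Matrix (Fin n) (Fin N) ℝ)
    (hQ : ∀ a α, Q a α = Real.sqrt (w α) * MvPolynomial.eval (pts α) (e a))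
    (Λ : Fin d → Fin N → ℝ) (hΛ : ∀ i α, Λ i α = pts α i) :
    Q * Qᵀ = 1 ∧
    (∀ i, A i = Q * Matrix.diagonal (Λ i) * Qᵀ) ∧
    ∃ Atil : Fin d → Matrix (Fin N) (Fin N) ℝ,
      (∀ i, (Atil i).IsSymm) ∧
      (∀ i, (Atil i).submatrix (Fin.castLE hnN) (Fin.castLE hnN) = A i) ∧
      (∀ i j, Atil i * Atil j = Atil j * Atil i) := by
  have key : ∀ (a b : Fin n) (α : Fin N) (c : ℝ),
      (Real.sqrt (w α) * MvPolynomial.eval (pts α) (e a)) * c *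
        (Real.sqrt (w α) * MvPolynomial.eval (pts α) (e b))
      = w α * (MvPolynomial.eval (pts α) (e a) * c * MvPolynomial.eval (pts α) (e b)) := by
    intro a b α c
    have hs : Real.sqrt (w α) * Real.sqrt (w α) = w α := Real.mul_self_sqrt (hw α).le
    linear_combination (MvPolynomial.eval (pts α) (e a) * c * MvPolynomial.eval (pts α) (e b)) * hs
  have hQQ : Q * Qᵀ = 1 := by
    ext a b
    have hdegab : (e a * e b).totalDegree ≤ 2 * q + 1 := by
      calc (e a * e b).totalDegree ≤ (e a).totalDegree + (e b).totalDegree :=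
            MvPolynomial.totalDegree_mul _ _
        _ ≤ 2 * q + 1 := by have := hdeg a; have := hdeg b; omega
    have h := hexact _ hdegab
    simp only [MvPolynomial.eval_mul] at h
    rw [horth a b] at h
    rw [Matrix.mul_apply]
    have : ∀ α, Q a α * Qᵀ α b
        = w α * (MvPolynomial.eval (pts α) (e a) * MvPolynomial.eval (pts α) (e b)) := by
      intro α
      rw [Matrix.transpose_apply, hQ, hQ]
      have := key a b α 1
      simpa using this
    simp_rw [this]
    rw [← h, Matrix.one_apply]
  have hAQ : ∀ i, A i = Q * Matrix.diagonal (Λ i) * Qᵀ := by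
    intro i
    ext a b
    have hdegab : (e a * MvPolynomial.X i * e b).totalDegree ≤ 2 * q + 1 := by
      calc (e a * MvPolynomial.X i * e b).totalDegree
          ≤ (e a * MvPolynomial.X i).totalDegree + (e b).totalDegree :=
            MvPolynomial.totalDegree_mul _ _
        _ ≤ (e a).totalDegree + (MvPolynomial.X i).totalDegree + (e b).totalDegree := by
            have := MvPolynomial.totalDegree_mul (e a) (MvPolynomial.X i : MvPolynomial (Fin d) ℝ)
            omega
        _ ≤ 2 * q + 1 := by
            have := hdeg a; have := hdeg b
            rw [MvPolynomial.totalDegree_X]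
            omega
    have h := hexact _ hdegab
    simp only [MvPolynomial.eval_mul, MvPolynomial.eval_X] at h
    rw [Matrix.mul_apply]
    have hent : ∀ α, (Q * Matrix.diagonal (Λ i)) a α * Qᵀ α b
        = w α * (MvPolynomial.eval (pts α) (e a) * pts α i * MvPolynomial.eval (pts α) (e b)) := by
      intro α
      rw [Matrix.mul_diagonal, Matrix.transpose_apply, hQ, hQ, hΛ]
      have := key a b α (pts α i)
      linarith [this]
    simp_rw [hent]
    rw [hA, h]
  refine ⟨hQQ, hAQ, ?_⟩
  -- extend Q to an orthogonal matrix U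
  set v : Fin N → EuclideanSpace ℝ (Fin N) :=
    fun i => if h : (i : ℕ) < n then WithLp.toLp 2 (fun α => Q ⟨i, h⟩ α) else 0 with hv
  set s : Set (Fin N) := {i | (i : ℕ) < n} with hsdef
  have hcard : Module.finrank ℝ (EuclideanSpace ℝ (Fin N)) = Fintype.card (Fin N) := by simp
  have hvo : Orthonormal ℝ (s.restrict v) := by
    rw [orthonormal_iff_ite]
    rintro ⟨i, hi⟩ ⟨j, hj⟩
    have hi' : (i : ℕ) < n := hi
    have hj' : (j : ℕ) < n := hj
    simp only [Set.restrict_apply, hv, dif_pos hi', dif_pos hj']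
    rw [PiLp.inner_apply]
    simp only [RCLike.inner_apply, conj_trivial]
    have hQij := congrFun (congrFun hQQ ⟨i, hi'⟩) ⟨j, hj'⟩
    rw [Matrix.mul_apply, Matrix.one_apply] at hQij
    have hgoal : (∑ α, Q ⟨i, hi'⟩ α * Q ⟨j, hj'⟩ α)
        = if (⟨i, hi⟩ : s) = ⟨j, hj⟩ then (1 : ℝ) else 0 := by
      rw [show (∑ α, Q ⟨i, hi'⟩ α * Q ⟨j, hj'⟩ α)
          = ∑ α, Q ⟨i, hi'⟩ α * Qᵀ α ⟨j, hj'⟩ from rfl, hQij]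
      simp [Fin.ext_iff, Subtype.ext_iff]
    rw [← hgoal]
    change ∑ x, (if h : (j : ℕ) < n then WithLp.toLp 2 (fun α => Q ⟨j, h⟩ α)
        else (0 : EuclideanSpace ℝ (Fin N))).ofLp x *
      (if h : (i : ℕ) < n then WithLp.toLp 2 (fun α => Q ⟨i, h⟩ α)
        else (0 : EuclideanSpace ℝ (Fin N))).ofLp x = _
    rw [dif_pos hi', dif_pos hj']
    exact Finset.sum_congr rfl fun x _ => mul_comm _ _
  obtain ⟨b, hb⟩ := hvo.exists_orthonormalBasis_extension_of_card_eq hcard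
  set U : Matrix (Fin N) (Fin N) ℝ := fun i α => b i α with hU
  have hUU : U * Uᵀ = 1 := by
    ext i j
    have := (orthonormal_iff_ite.mp b.orthonormal) i j
    rw [PiLp.inner_apply] at this
    simp only [RCLike.inner_apply, conj_trivial] at this
    rw [Matrix.mul_apply, Matrix.one_apply]
    exact (Finset.sum_congr rfl fun x _ => mul_comm _ _).trans this
  have hUtU : Uᵀ * U = 1 := mul_eq_one_comm.mp hUU
  have hUQ : ∀ (a : Fin n) (α : Fin N), U (Fin.castLE hnN a) α = Q a α := by
    intro a α
    have hmem : (Fin.castLE hnN a) ∈ s := by simp [hsdef]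
    have := hb _ hmem
    rw [hU]
    simp only
    rw [this, hv]
    simp only [dif_pos (show ((Fin.castLE hnN a : Fin N) : ℕ) < n from a.isLt)]
    rfl
  refine ⟨fun i => U * Matrix.diagonal (Λ i) * Uᵀ, ?_, ?_, ?_⟩
  · intro i
    simp [Matrix.IsSymm, Matrix.transpose_mul, Matrix.diagonal_transpose, Matrix.mul_assoc]
  · intro i
    ext a c
    rw [Matrix.submatrix_apply, hAQ i]
    dsimp only
    rw [Matrix.mul_apply, Matrix.mul_apply]
    congr 1; funext α
    rw [Matrix.mul_diagonal, Matrix.mul_diagonal, Matrix.transpose_apply, Matrix.transpose_apply,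
      hUQ, hUQ]
  · intro i j
    have hmul : ∀ i j : Fin d, (U * Matrix.diagonal (Λ i) * Uᵀ) * (U * Matrix.diagonal (Λ j) * Uᵀ)
        = U * Matrix.diagonal (fun α => Λ i α * Λ j α) * Uᵀ := by
      intro i j
      calc (U * Matrix.diagonal (Λ i) * Uᵀ) * (U * Matrix.diagonal (Λ j) * Uᵀ)
          = U * (Matrix.diagonal (Λ i) * ((Uᵀ * U) * (Matrix.diagonal (Λ j) * Uᵀ))) := by
            simp only [Matrix.mul_assoc]
        _ = U * (Matrix.diagonal (Λ i) * (Matrix.diagonal (Λ j) * Uᵀ)) := by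
            rw [hUtU, Matrix.one_mul]
        _ = U * Matrix.diagonal (fun α => Λ i α * Λ j α) * Uᵀ := by
            rw [← Matrix.mul_assoc (Matrix.diagonal (Λ i)), Matrix.diagonal_mul_diagonal,
              Matrix.mul_assoc]
    rw [hmul, hmul,
      show (fun α => Λ i α * Λ j α) = (fun α => Λ j α * Λ i α) from funext fun α => mul_comm _ _]
end

section
/- Multidimensional δ lemma: Let ι: P_q → V = ℝ^N be an isometric inclusion (via an orthonormal basis), let Ã_1,...,Ã_d be N×N symmetric commuting extensions of the matrices A_i representing the operators χ_i on P_q, satisfying the compatibility condition Ã_i(ιp') = ι(x_i p') for all p' ∈ P_{q-1} and all i. Let {u_α} be a common orthonormal eigenbasis with Ã_i u_α = Λ_{iα} u_α, and set λ_α = (Λ_{1α},...,Λ_{dα}) ∈ ℝ^d. Then for every p ∈ P_q, ⟨ιp, u_α⟩ = ⟨ι1, u_α⟩ · p(λ_α). -/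
/-!
Pair with the eigenvector: `ℓ v = v ⬝ᵥ u α`. Since `Ã i` is symmetric with eigenvector `u α`,
`ℓ (Ã i v) = Λ i α * ℓ v`, so by compatibility `ℓ (ι (X i * p')) = Λ i α * ℓ (ι p')` whenever
`deg p' < q`. Peeling one variable at a time off a monomial, a linear functional with this
property agrees with `ℓ (ι 1) • eval (λ α)` on monomials of degree `≤ q`, hence on all of `P_q`.
-/

open Matrix

namespace MvPolynomial

variable {σ R : Type*} [CommRing R] [IsDomain R]

theorem apply_monomial_eq_mul_eval_of_map_X_mul {q : ℕ} (L : MvPolynomial σ R →ₗ[R] R)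
    (x : σ → R) (hL : ∀ i p, p.totalDegree + 1 ≤ q → L (X i * p) = x i * L p)
    (s : σ →₀ ℕ) (a : R) : (monomial s a).totalDegree ≤ q →
    L (monomial s a) = L 1 * eval x (monomial s a) := by
  refine induction_on_monomial (fun a _ => ?_) (fun p i ih hp => ?_) s a
  · simp [C_eq_smul_one, mul_comm]
  · rcases eq_or_ne p 0 with rfl | hp0
    · simp
    rw [totalDegree_mul_of_isDomain hp0 (X_ne_zero i), totalDegree_X] at hp
    rw [mul_comm, hL i p hp, ih (by omega), eval_mul, eval_X]
    ring

theorem apply_eq_mul_eval_of_map_X_mul {q : ℕ} (L : MvPolynomial σ R →ₗ[R] R)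
    (x : σ → R) (hL : ∀ i p, p.totalDegree + 1 ≤ q → L (X i * p) = x i * L p)
    {p : MvPolynomial σ R} (hp : p.totalDegree ≤ q) :
    L p = L 1 * eval x p := by
  rw [p.as_sum, map_sum, map_sum, Finset.mul_sum]
  refine Finset.sum_congr rfl fun s hs => apply_monomial_eq_mul_eval_of_map_X_mul L x hL s _ ?_
  exact (totalDegree_monomial_le s _).trans ((le_totalDegree hs).trans hp)

end MvPolynomial

theorem Matrix.IsSymm.mulVec_dotProduct_of_mulVec_eq_smul {n R : Type*} [Fintype n]
    [CommSemiring R] {A : Matrix n n R} (hA : A.IsSymm) {u : n → R} {c : R}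
    (hu : A *ᵥ u = c • u) (v : n → R) : A *ᵥ v ⬝ᵥ u = c * (v ⬝ᵥ u) := by
  rw [dotProduct_comm, dotProduct_mulVec, ← mulVec_transpose, hA.eq, hu, smul_dotProduct,
    smul_eq_mul, dotProduct_comm]

theorem multidimensional_delta_lemma_general
    (d q N : ℕ)
    (Atil : Fin d → Matrix (Fin N) (Fin N) ℝ)
    (hsymm : ∀ i, (Atil i).IsSymm)
    (ι : MvPolynomial (Fin d) ℝ →ₗ[ℝ] (Fin N → ℝ))
    (hcompat : ∀ i, ∀ p : MvPolynomial (Fin d) ℝ, p.totalDegree + 1 ≤ q →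
      (Atil i).mulVec (ι p) = ι (MvPolynomial.X i * p))
    (u : Fin N → Fin N → ℝ)
    (Λ : Fin d → Fin N → ℝ)
    (heig : ∀ i α, (Atil i).mulVec (u α) = Λ i α • u α) :
    ∀ p : MvPolynomial (Fin d) ℝ, p.totalDegree ≤ q → ∀ α,
      ι p ⬝ᵥ u α = (ι 1 ⬝ᵥ u α) * MvPolynomial.eval (fun i => Λ i α) p := by
  intro p hp α
  refine MvPolynomial.apply_eq_mul_eval_of_map_X_mul ((dotProductBilin ℝ ℝ).flip (u α) ∘ₗ ι)
    (fun i => Λ i α) (fun i p' hp' => ?_) hp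
  simp only [LinearMap.comp_apply, LinearMap.flip_apply, dotProductBilin_apply_apply]
  rw [← hcompat i p' hp', (hsymm i).mulVec_dotProduct_of_mulVec_eq_smul (heig i α)]

/-- the multidimensional δ lemma: for commuting symmetric extensions
satisfying the compatibility condition, with common orthonormal eigenbasis {u_α},
⟨ιp, u_α⟩ = ⟨ι1, u_α⟩ · p(λ_α) for every p of total degree ≤ q. -/
theorem multidimensional_delta_lemma
    (d q n N : ℕ) (hnN : n ≤ N)
    (A : Fin d → Matrix (Fin n) (Fin n) ℝ)
    (Atil : Fin d → Matrix (Fin N) (Fin N) ℝ)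
    (hsymm : ∀ i, (Atil i).IsSymm)
    (hext : ∀ i a b, Atil i (Fin.castLE hnN a) (Fin.castLE hnN b) = A i a b)
    (hcomm : ∀ i j, Atil i * Atil j = Atil j * Atil i)
    (ι : MvPolynomial (Fin d) ℝ →ₗ[ℝ] (Fin N → ℝ))
    (hcompat : ∀ i, ∀ p : MvPolynomial (Fin d) ℝ, p.totalDegree + 1 ≤ q →
      (Atil i).mulVec (ι p) = ι (MvPolynomial.X i * p))
    (u : Fin N → Fin N → ℝ)
    (horth : ∀ α β, u α ⬝ᵥ u β = if α = β then (1 : ℝ) else 0)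
    (Λ : Fin d → Fin N → ℝ)
    (heig : ∀ i α, (Atil i).mulVec (u α) = Λ i α • u α) :
    ∀ p : MvPolynomial (Fin d) ℝ, p.totalDegree ≤ q → ∀ α,
      ι p ⬝ᵥ u α = (ι 1 ⬝ᵥ u α) * MvPolynomial.eval (fun i => Λ i α) p :=
  multidimensional_delta_lemma_general d q N Atil hsymm ι hcompat u Λ heig
end
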